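/- arXiv:2303.06227 — 2 statements merged into one kernel-verified Lean document; each statement's English description precedes it below -/
import Mathlib

section
/- Under consistency of the potential outcomes and Assumptions (A5) (counterfactual offsetting effect) and (A6) (conditional counterfactual parallel trends with the neighboring controls), for any versions Δμ_N of E[ΔY ∣ G=N, X], Δμ_C of E[ΔY ∣ G=C, X], and f of E[Y₁^{(1,1)} − Y₁^{(1,0)} ∣ G=T, X], one has Δμ_N(X) − Δμ_C(X) = f(X) P-almost surely. (Identification of the conditional negative offsetting effect on the treated.) -/
open MeasureTheory ProbabilityTheory Filter Topology

/-- Group label: `T` = treated (`g(A)=(1,0)`), `N` = neighboring control (`g(A)=(0,1)`),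
`C` = non-neighboring control (`g(A)=(0,0)`). -/
inductive GLabel : Type
  | T | N | C
  deriving DecidableEq

instance : MeasurableSpace GLabel := ⊤

/-- The σ-algebra `𝔛` generated by the covariates `X`. -/
def sigmaX {Ω : Type} {q : ℕ} (X : Ω → (Fin q → ℝ)) : MeasurableSpace Ω :=
  MeasurableSpace.comap X inferInstance

/-- The indicator `1{G = g}` as a real-valued function. -/
def indG {Ω : Type} (G : Ω → GLabel) (g : GLabel) (ω : Ω) : ℝ :=
  if G ω = g then 1 else 0

/-- `f` is a version of the conditional expectation `E[Z ∣ G = g, X]`: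
it is measurable and `E[Z·1{G=g} ∣ 𝔛] = f(X)·e_g(X)` `P`-a.s. -/
def IsCondVersion {Ω : Type} [MeasurableSpace Ω] (P : Measure Ω) {q : ℕ}
    (X : Ω → (Fin q → ℝ)) (G : Ω → GLabel) (e : GLabel → (Fin q → ℝ) → ℝ)
    (g : GLabel) (Z : Ω → ℝ) (f : (Fin q → ℝ) → ℝ) : Prop :=
  Measurable f ∧
    P[(fun ω => Z ω * indG G g ω) | sigmaX X] =ᵐ[P] (fun ω => f (X ω) * e g (X ω))

/-!
On `{G = N}` consistency gives `ΔY = (Y₁^{(0,1)} - Y₁^{(0,0)}) + (Y₁^{(0,0)} - Y₀^{(0,0)})`,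
and on `{G = C}` it gives `ΔY = Y₁^{(0,0)} - Y₀^{(0,0)}`. By linearity of the conditional expectation,
`Δμ_N - Δμ_C` is the effect of the neighbour on the neighbouring controls plus the difference of
the two counterfactual trends; (A6) cancels the trends and (A5) turns the effect into the negative
offsetting effect on the treated. Versions are unique because `e_g > 0`.
-/

theorem mul_indG_eq_indicator {Ω : Type} (G : Ω → GLabel) (g : GLabel) (Z : Ω → ℝ) :
    (fun ω => Z ω * indG G g ω) = {ω | G ω = g}.indicator Z := by
  ext ω
  by_cases h : G ω = g <;> simp [indG, h]

theorem MeasureTheory.Integrable.mul_indG {Ω : Type} [MeasurableSpace Ω] {P : Measure Ω}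
    {G : Ω → GLabel} (hG : Measurable G) (g : GLabel) {Z : Ω → ℝ} (hZ : Integrable Z P) :
    Integrable (fun ω => Z ω * indG G g ω) P := by
  rw [mul_indG_eq_indicator]
  exact hZ.indicator (hG (measurableSet_singleton g))

namespace IsCondVersion

variable {Ω : Type} [MeasurableSpace Ω] {P : Measure Ω} {q : ℕ} {X : Ω → (Fin q → ℝ)}
  {G : Ω → GLabel} {e : GLabel → (Fin q → ℝ) → ℝ} {g : GLabel} {Z Z' : Ω → ℝ}
  {f f' : (Fin q → ℝ) → ℝ}

theorem congr_of_ae_on_group (h : IsCondVersion P X G e g Z f)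
    (hZ : ∀ᵐ ω ∂P, G ω = g → Z ω = Z' ω) : IsCondVersion P X G e g Z' f := by
  refine ⟨h.1, (condExp_congr_ae ?_).symm.trans h.2⟩
  filter_upwards [hZ] with ω hω
  by_cases hg : G ω = g
  · rw [hω hg]
  · simp [indG, hg]

theorem add (hG : Measurable G) (hZ : Integrable Z P) (hZ' : Integrable Z' P)
    (h : IsCondVersion P X G e g Z f) (h' : IsCondVersion P X G e g Z' f') :
    IsCondVersion P X G e g (fun ω => Z ω + Z' ω) (fun x => f x + f' x) := by
  refine ⟨h.1.add h'.1, ?_⟩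
  have hsplit : (fun ω => (Z ω + Z' ω) * indG G g ω)
      = (fun ω => Z ω * indG G g ω) + (fun ω => Z' ω * indG G g ω) := by
    ext ω
    simp only [Pi.add_apply]
    ring
  rw [hsplit]
  refine (condExp_add (hZ.mul_indG hG g) (hZ'.mul_indG hG g) _).trans ?_
  filter_upwards [h.2, h'.2] with ω hω hω'
  simp only [Pi.add_apply, hω, hω']
  ring

theorem neg (h : IsCondVersion P X G e g Z f) :
    IsCondVersion P X G e g (fun ω => -Z ω) (fun x => -f x) := by
  refine ⟨h.1.neg, ?_⟩
  have hneg : (fun ω => -Z ω * indG G g ω) = -(fun ω => Z ω * indG G g ω) := by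
    ext ω
    simp only [Pi.neg_apply]
    ring
  rw [hneg]
  refine (condExp_neg _ _).trans ?_
  filter_upwards [h.2] with ω hω
  simp only [Pi.neg_apply, hω]
  ring

theorem ae_eq (he : ∀ x, e g x ≠ 0) (h : IsCondVersion P X G e g Z f)
    (h' : IsCondVersion P X G e g Z f') : ∀ᵐ ω ∂P, f (X ω) = f' (X ω) := by
  filter_upwards [h.2.symm.trans h'.2] with ω hω
  exact mul_right_cancel₀ (he _) hω

end IsCondVersion

theorem stmt_5_general
    {Ω : Type} [MeasurableSpace Ω] (P : Measure Ω)
    {q : ℕ} (X : Ω → (Fin q → ℝ))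
    (G : Ω → GLabel) (hG : Measurable G)
    (Y0 Y1 : Ω → ℝ)
    (e : GLabel → (Fin q → ℝ) → ℝ)
    (ε : ℝ) (hε : 0 < ε) (hpos : ∀ g x, ε ≤ e g x)
    (Y110 Y111 Y101 Y100 Y000 : Ω → ℝ)
    (hI01 : Integrable Y101 P) (hI00 : Integrable Y100 P) (hI000 : Integrable Y000 P)
    (hconsN : ∀ᵐ ω ∂P, G ω = GLabel.N → Y1 ω = Y101 ω)
    (hconsC : ∀ᵐ ω ∂P, G ω = GLabel.C → Y1 ω = Y100 ω)
    (hcons0 : Y0 =ᵐ[P] Y000)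
    (fT fN : (Fin q → ℝ) → ℝ)
    (hfT : IsCondVersion P X G e GLabel.T (fun ω => Y110 ω - Y111 ω) fT)
    (hfN : IsCondVersion P X G e GLabel.N (fun ω => Y101 ω - Y100 ω) fN)
    (hA5 : ∀ᵐ ω ∂P, fT (X ω) + fN (X ω) = 0)
    (gN gC : (Fin q → ℝ) → ℝ)
    (hgN : IsCondVersion P X G e GLabel.N (fun ω => Y100 ω - Y000 ω) gN)
    (hgC : IsCondVersion P X G e GLabel.C (fun ω => Y100 ω - Y000 ω) gC)
    (hA6 : ∀ᵐ ω ∂P, gN (X ω) = gC (X ω))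
    (ΔμN ΔμC : (Fin q → ℝ) → ℝ)
    (hΔμN : IsCondVersion P X G e GLabel.N (fun ω => Y1 ω - Y0 ω) ΔμN)
    (hΔμC : IsCondVersion P X G e GLabel.C (fun ω => Y1 ω - Y0 ω) ΔμC)
    (f : (Fin q → ℝ) → ℝ)
    (hf : IsCondVersion P X G e GLabel.T (fun ω => Y111 ω - Y110 ω) f)
    :
    ∀ᵐ ω ∂P, ΔμN (X ω) - ΔμC (X ω) = f (X ω) := by
  have he : ∀ g x, e g x ≠ 0 := fun g x => (hε.trans_le (hpos g x)).ne'
  have hN : IsCondVersion P X G e .N (fun ω => Y1 ω - Y0 ω) (fun x => fN x + gN x) := by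
    refine (hfN.add hG (hI01.sub hI00) (hI00.sub hI000) hgN).congr_of_ae_on_group ?_
    filter_upwards [hconsN, hcons0] with ω h1 h0 hω
    rw [h1 hω, h0, Pi.sub_apply, Pi.sub_apply]
    ring
  have hC : IsCondVersion P X G e .C (fun ω => Y1 ω - Y0 ω) gC := by
    refine hgC.congr_of_ae_on_group ?_
    filter_upwards [hconsC, hcons0] with ω h1 h0 hω
    rw [h1 hω, h0]
  have hT : IsCondVersion P X G e .T (fun ω => Y111 ω - Y110 ω) (fun x => -fT x) :=
    hfT.neg.congr_of_ae_on_group (ae_of_all _ fun ω _ => neg_sub _ _)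
  filter_upwards [hΔμN.ae_eq (he _) hN, hΔμC.ae_eq (he _) hC, hf.ae_eq (he _) hT, hA5, hA6]
    with ω hμN hμC hμT hA5ω hA6ω
  rw [hμN, hμC, hμT, hA6ω]
  linarith

theorem stmt_5
    {Ω : Type} [MeasurableSpace Ω] (P : Measure Ω) [IsProbabilityMeasure P]
    {q : ℕ} (X : Ω → (Fin q → ℝ)) (hX : Measurable X)
    (G : Ω → GLabel) (hG : Measurable G)
    (Y0 Y1 : Ω → ℝ) (hY0 : Integrable Y0 P) (hY1 : Integrable Y1 P)
    (e : GLabel → (Fin q → ℝ) → ℝ) (he : ∀ g, Measurable (e g))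
    (he1 : ∀ g x, e g x ≤ 1)
    (hprop : ∀ g : GLabel,
      P[(fun ω => indG G g ω) | sigmaX X] =ᵐ[P] (fun ω => e g (X ω)))
    (ε : ℝ) (hε : 0 < ε) (hpos : ∀ g x, ε ≤ e g x)
    (Y110 Y111 Y101 Y100 Y000 : Ω → ℝ)
    (hI10 : Integrable Y110 P) (hI11 : Integrable Y111 P)
    (hI01 : Integrable Y101 P) (hI00 : Integrable Y100 P) (hI000 : Integrable Y000 P)
    (hconsT : ∀ᵐ ω ∂P, G ω = GLabel.T → Y1 ω = Y110 ω)
    (hconsN : ∀ᵐ ω ∂P, G ω = GLabel.N → Y1 ω = Y101 ω)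
    (hconsC : ∀ᵐ ω ∂P, G ω = GLabel.C → Y1 ω = Y100 ω)
    (hcons0 : Y0 =ᵐ[P] Y000)
    (fT fN : (Fin q → ℝ) → ℝ)
    (hfT : IsCondVersion P X G e GLabel.T (fun ω => Y110 ω - Y111 ω) fT)
    (hfN : IsCondVersion P X G e GLabel.N (fun ω => Y101 ω - Y100 ω) fN)
    (hA5 : ∀ᵐ ω ∂P, fT (X ω) + fN (X ω) = 0)
    (gN gC : (Fin q → ℝ) → ℝ)
    (hgN : IsCondVersion P X G e GLabel.N (fun ω => Y100 ω - Y000 ω) gN)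
    (hgC : IsCondVersion P X G e GLabel.C (fun ω => Y100 ω - Y000 ω) gC)
    (hA6 : ∀ᵐ ω ∂P, gN (X ω) = gC (X ω))
    (ΔμN ΔμC : (Fin q → ℝ) → ℝ)
    (hΔμN : IsCondVersion P X G e GLabel.N (fun ω => Y1 ω - Y0 ω) ΔμN)
    (hΔμC : IsCondVersion P X G e GLabel.C (fun ω => Y1 ω - Y0 ω) ΔμC)
    (f : (Fin q → ℝ) → ℝ)
    (hf : IsCondVersion P X G e GLabel.T (fun ω => Y111 ω - Y110 ω) f)
    :
    ∀ᵐ ω ∂P, ΔμN (X ω) - ΔμC (X ω) = f (X ω) :=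
  stmt_5_general P X G hG Y0 Y1 e ε hε hpos Y110 Y111 Y101 Y100 Y000 hI01 hI00 hI000 hconsN hconsC
    hcons0 fT fN hfT hfN hA5 gN gC hgN hgC hA6 ΔμN ΔμC hΔμN hΔμC f hf
end

section
/- (Lemma 1, almost-sure consistency of the IPW estimator.) Let (Y₀ᵢ, Y₁ᵢ, Gᵢ, Xᵢ)_{i≥1} be an i.i.d. sequence with the same distribution as (Y₀, Y₁, G, X), and set ΔYᵢ := Y₁ᵢ − Y₀ᵢ. Under consistency of the potential outcomes, positivity, and Assumptions (A5) and (A6), the sample averages (1/n)·Σ_{i=1}^{n} (e_T(Xᵢ)/p_T)·( 1{Gᵢ=N}/e_N(Xᵢ) − 1{Gᵢ=C}/e_C(Xᵢ) )·ΔYᵢ converge almost surely, as n → ∞, to δ := E[(Y₁^{(1,1)} − Y₁^{(1,0)})·1{G=T}]/p_T. -/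
open MeasureTheory ProbabilityTheory Filter Topology

/-!
Inverse propensity weighting turns a weighted group average into an average over the covariates:
pulling the bounded `𝔛`-measurable weight `e_T/e_g` out of the conditional expectation gives
`E[(e_T/e_g)(X)·Z·1{G=g}] = E[e_T(X)·E[Z ∣ G=g, X]]`. By consistency the mean of the IPW score
splits into `E[e_T f_N] + E[e_T g_N] − E[e_T g_C]`; (A6) cancels the two trend terms and (A5)
turns `E[e_T f_N]` into `−E[e_T f_T] = E[(Y₁^{(1,1)} − Y₁^{(1,0)})·1{G=T}]`. Positivity makes the
score integrable, so the strong law of large numbers applies.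
-/

theorem integral_mul_eq_of_condExp_ae_eq {Ω : Type*} {m m₀ : MeasurableSpace Ω}
    {μ : Measure Ω} [IsFiniteMeasure μ] (hm : m ≤ m₀) {H Y W : Ω → ℝ}
    (hH : StronglyMeasurable[m] H) (c : ℝ) (hHc : ∀ᵐ ω ∂μ, ‖H ω‖ ≤ c)
    (hY : Integrable Y μ) (hYW : μ[Y | m] =ᵐ[μ] W) :
    ∫ ω, H ω * Y ω ∂μ = ∫ ω, H ω * W ω ∂μ := by
  rw [← integral_condExp hm]
  refine integral_congr_ae ((condExp_stronglyMeasurable_mul_of_bound hm hH hY c hHc).trans ?_)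
  filter_upwards [hYW] with ω hω
  simp only [Pi.mul_apply, hω]

theorem ae_tendsto_average_comp_of_iIndepFun {Ω α : Type*} [MeasurableSpace Ω]
    [MeasurableSpace α] {P : Measure Ω} {V : ℕ → Ω → α} {W : Ω → α} {F : α → ℝ}
    (hF : Measurable F) (hV : iIndepFun V P) (hVW : ∀ i, IdentDistrib (V i) W P P)
    (hFW : Integrable (fun ω => F (W ω)) P) :
    ∀ᵐ ω ∂P, Tendsto (fun n : ℕ => (n : ℝ)⁻¹ * ∑ i ∈ Finset.range n, F (V i ω))
      atTop (𝓝 (∫ ω, F (W ω) ∂P)) := by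
  have hid : ∀ i, IdentDistrib (fun ω => F (V i ω)) (fun ω => F (W ω)) P P :=
    fun i => (hVW i).comp hF
  have hlaw := strong_law_ae_real (fun i ω => F (V i ω)) ((hid 0).integrable_iff.mpr hFW)
    (fun i j hij => (hV.indepFun hij).comp hF hF) (fun i => (hid i).trans (hid 0).symm)
  filter_upwards [hlaw] with ω hω
  rw [← (hid 0).integral_eq]
  simpa only [div_eq_inv_mul] using hω

theorem norm_div_le_inv_of_le {a b ε : ℝ} (hε : 0 < ε) (ha₀ : 0 ≤ a) (ha₁ : a ≤ 1)
    (hb : ε ≤ b) : ‖a / b‖ ≤ ε⁻¹ := by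
  rw [Real.norm_of_nonneg (div_nonneg ha₀ (hε.le.trans hb)), ← one_div]
  exact div_le_div₀ zero_le_one ha₁ hε hb

theorem measurable_indG {Ω : Type} [MeasurableSpace Ω] {G : Ω → GLabel} (hG : Measurable G)
    (g : GLabel) : Measurable (indG G g) :=
  Measurable.ite (hG (MeasurableSpace.measurableSet_top (s := {g}))) measurable_const
    measurable_const

theorem norm_indG_le {Ω : Type} (G : Ω → GLabel) (g : GLabel) (ω : Ω) : ‖indG G g ω‖ ≤ 1 := by
  unfold indG; split <;> simp

noncomputable def ipwWeight {q : ℕ} (e : GLabel → (Fin q → ℝ) → ℝ) (g : GLabel)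
    (x : Fin q → ℝ) : ℝ :=
  e GLabel.T x / e g x

noncomputable def ipwScore {q : ℕ} (e : GLabel → (Fin q → ℝ) → ℝ)
    (v : ℝ × ℝ × GLabel × (Fin q → ℝ)) : ℝ :=
  e GLabel.T v.2.2.2 *
    ((if v.2.2.1 = GLabel.N then (1:ℝ) else 0) / e GLabel.N v.2.2.2 -
      (if v.2.2.1 = GLabel.C then (1:ℝ) else 0) / e GLabel.C v.2.2.2) *
    (v.2.1 - v.1)

section Propensity

variable {q : ℕ} {e : GLabel → (Fin q → ℝ) → ℝ}

theorem measurable_ipwWeight (he : ∀ g, Measurable (e g)) (g : GLabel) :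
    Measurable (ipwWeight e g) :=
  (he _).div (he _)

theorem norm_ipwWeight_le {ε : ℝ} (hε : 0 < ε) (hpos : ∀ g x, ε ≤ e g x)
    (he1 : ∀ g x, e g x ≤ 1) (g : GLabel) (x : Fin q → ℝ) : ‖ipwWeight e g x‖ ≤ ε⁻¹ :=
  norm_div_le_inv_of_le hε (hε.le.trans (hpos _ _)) (he1 _ _) (hpos _ _)

theorem ipwWeight_T {x : Fin q → ℝ} (hx : e GLabel.T x ≠ 0) : ipwWeight e GLabel.T x = 1 :=
  div_self hx

theorem measurable_ipwScore (he : ∀ g, Measurable (e g)) : Measurable (ipwScore e) := by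
  have hx : Measurable (fun v : ℝ × ℝ × GLabel × (Fin q → ℝ) => v.2.2.2) :=
    measurable_snd.snd.snd
  have hind : ∀ g, Measurable (fun v : ℝ × ℝ × GLabel × (Fin q → ℝ) =>
      if v.2.2.1 = g then (1:ℝ) else 0) := fun g =>
    Measurable.ite (measurable_snd.snd.fst (MeasurableSpace.measurableSet_top (s := {g})))
      measurable_const measurable_const
  exact (((he _).comp hx).mul (((hind _).div ((he _).comp hx)).sub
    ((hind _).div ((he _).comp hx)))).mul (measurable_snd.fst.sub measurable_fst)

end Propensity

section Identification

variable {Ω : Type} [MeasurableSpace Ω] {P : Measure Ω} {q : ℕ} {X : Ω → (Fin q → ℝ)}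
  {G : Ω → GLabel} {e : GLabel → (Fin q → ℝ) → ℝ}

theorem integrable_comp_mul_indG (hX : Measurable X) (hG : Measurable G) {w : (Fin q → ℝ) → ℝ}
    (hw : Measurable w) {c : ℝ} (hwc : ∀ x, ‖w x‖ ≤ c) {Z : Ω → ℝ} (hZ : Integrable Z P)
    (g : GLabel) : Integrable (fun ω => w (X ω) * (Z ω * indG G g ω)) P :=
  (hZ.mul_bdd (measurable_indG hG g).aestronglyMeasurable
    (Eventually.of_forall (norm_indG_le G g))).bdd_mul (hw.comp hX).aestronglyMeasurable
    (Eventually.of_forall fun ω => hwc (X ω))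

theorem integrable_ipwWeight_comp_mul_indG (hX : Measurable X) (hG : Measurable G)
    (he : ∀ g, Measurable (e g)) {ε : ℝ} (hε : 0 < ε) (hpos : ∀ g x, ε ≤ e g x)
    (he1 : ∀ g x, e g x ≤ 1) {Z : Ω → ℝ} (hZ : Integrable Z P) (g : GLabel) :
    Integrable (fun ω => ipwWeight e g (X ω) * (Z ω * indG G g ω)) P :=
  integrable_comp_mul_indG hX hG (measurable_ipwWeight he g) (norm_ipwWeight_le hε hpos he1 g) hZ g

theorem IsCondVersion.integral_comp_mul [IsFiniteMeasure P] {g : GLabel} {Z : Ω → ℝ}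
    {f : (Fin q → ℝ) → ℝ} (hf : IsCondVersion P X G e g Z f) (hX : Measurable X)
    (hG : Measurable G) (hZ : Integrable Z P) {w : (Fin q → ℝ) → ℝ} (hw : Measurable w)
    {c : ℝ} (hwc : ∀ x, ‖w x‖ ≤ c) :
    ∫ ω, w (X ω) * (Z ω * indG G g ω) ∂P = ∫ ω, w (X ω) * (f (X ω) * e g (X ω)) ∂P :=
  integral_mul_eq_of_condExp_ae_eq hX.comap_le
    ((hw.comp (comap_measurable X)).stronglyMeasurable) c
    (Eventually.of_forall fun ω => hwc (X ω))
    (hZ.mul_bdd (measurable_indG hG g).aestronglyMeasurable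
      (Eventually.of_forall (norm_indG_le G g))) hf.2

theorem IsCondVersion.integral_ipwWeight_mul [IsFiniteMeasure P] {g : GLabel} {Z : Ω → ℝ}
    {f : (Fin q → ℝ) → ℝ} (hf : IsCondVersion P X G e g Z f) (hX : Measurable X)
    (hG : Measurable G) (hZ : Integrable Z P) (he : ∀ g, Measurable (e g)) {ε : ℝ}
    (hε : 0 < ε) (hpos : ∀ g x, ε ≤ e g x) (he1 : ∀ g x, e g x ≤ 1) :
    ∫ ω, ipwWeight e g (X ω) * (Z ω * indG G g ω) ∂P = ∫ ω, e GLabel.T (X ω) * f (X ω) ∂P := by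
  rw [hf.integral_comp_mul hX hG hZ (measurable_ipwWeight he g) (norm_ipwWeight_le hε hpos he1 g)]
  refine integral_congr_ae (Eventually.of_forall fun ω => ?_)
  have hne : e g (X ω) ≠ 0 := (hε.trans_le (hpos g (X ω))).ne'
  simp only [ipwWeight]
  field_simp

theorem ipwScore_ae_eq {Y0 Y1 Y101 Y100 Y000 : Ω → ℝ}
    (hconsN : ∀ᵐ ω ∂P, G ω = GLabel.N → Y1 ω = Y101 ω)
    (hconsC : ∀ᵐ ω ∂P, G ω = GLabel.C → Y1 ω = Y100 ω) (hcons0 : Y0 =ᵐ[P] Y000) :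
    (fun ω => ipwScore e (Y0 ω, Y1 ω, G ω, X ω)) =ᵐ[P] fun ω =>
      ipwWeight e GLabel.N (X ω) * ((Y101 ω - Y100 ω) * indG G GLabel.N ω) +
        ipwWeight e GLabel.N (X ω) * ((Y100 ω - Y000 ω) * indG G GLabel.N ω) -
        ipwWeight e GLabel.C (X ω) * ((Y100 ω - Y000 ω) * indG G GLabel.C ω) := by
  filter_upwards [hconsN, hconsC, hcons0] with ω hN hC h0
  cases hg : G ω <;> simp only [ipwScore, ipwWeight, indG, hg, h0, hN, hC, reduceCtorEq,
    if_true, if_false] <;> ring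

theorem integrable_ipwScore (hX : Measurable X) (hG : Measurable G)
    (he : ∀ g, Measurable (e g)) {ε : ℝ} (hε : 0 < ε) (hpos : ∀ g x, ε ≤ e g x)
    (he1 : ∀ g x, e g x ≤ 1) {Y0 Y1 Y101 Y100 Y000 : Ω → ℝ}
    (hI01 : Integrable Y101 P) (hI00 : Integrable Y100 P) (hI000 : Integrable Y000 P)
    (hconsN : ∀ᵐ ω ∂P, G ω = GLabel.N → Y1 ω = Y101 ω)
    (hconsC : ∀ᵐ ω ∂P, G ω = GLabel.C → Y1 ω = Y100 ω) (hcons0 : Y0 =ᵐ[P] Y000) :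
    Integrable (fun ω => ipwScore e (Y0 ω, Y1 ω, G ω, X ω)) P := by
  have hterm := fun {Z : Ω → ℝ} (hZ : Integrable Z P) =>
    integrable_ipwWeight_comp_mul_indG hX hG he hε hpos he1 hZ
  exact (((hterm (hI01.sub hI00) GLabel.N).add (hterm (hI00.sub hI000) GLabel.N)).sub
    (hterm (hI00.sub hI000) GLabel.C)).congr (ipwScore_ae_eq hconsN hconsC hcons0).symm

theorem integral_ipwScore [IsFiniteMeasure P] (hX : Measurable X) (hG : Measurable G)
    (he : ∀ g, Measurable (e g)) {ε : ℝ} (hε : 0 < ε) (hpos : ∀ g x, ε ≤ e g x)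
    (he1 : ∀ g x, e g x ≤ 1) {Y0 Y1 Y110 Y111 Y101 Y100 Y000 : Ω → ℝ}
    (hI10 : Integrable Y110 P) (hI11 : Integrable Y111 P)
    (hI01 : Integrable Y101 P) (hI00 : Integrable Y100 P) (hI000 : Integrable Y000 P)
    (hconsN : ∀ᵐ ω ∂P, G ω = GLabel.N → Y1 ω = Y101 ω)
    (hconsC : ∀ᵐ ω ∂P, G ω = GLabel.C → Y1 ω = Y100 ω) (hcons0 : Y0 =ᵐ[P] Y000)
    {fT fN : (Fin q → ℝ) → ℝ}
    (hfT : IsCondVersion P X G e GLabel.T (fun ω => Y110 ω - Y111 ω) fT)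
    (hfN : IsCondVersion P X G e GLabel.N (fun ω => Y101 ω - Y100 ω) fN)
    (hA5 : ∀ᵐ ω ∂P, fT (X ω) + fN (X ω) = 0)
    {gN gC : (Fin q → ℝ) → ℝ}
    (hgN : IsCondVersion P X G e GLabel.N (fun ω => Y100 ω - Y000 ω) gN)
    (hgC : IsCondVersion P X G e GLabel.C (fun ω => Y100 ω - Y000 ω) gC)
    (hA6 : ∀ᵐ ω ∂P, gN (X ω) = gC (X ω)) :
    ∫ ω, ipwScore e (Y0 ω, Y1 ω, G ω, X ω) ∂P =
      ∫ ω, (Y111 ω - Y110 ω) * indG G GLabel.T ω ∂P := by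
  have hterm := fun {Z : Ω → ℝ} (hZ : Integrable Z P) =>
    integrable_ipwWeight_comp_mul_indG hX hG he hε hpos he1 hZ
  have hN₁ : Integrable (fun ω => ipwWeight e GLabel.N (X ω) *
      ((Y101 ω - Y100 ω) * indG G GLabel.N ω)) P := hterm (hI01.sub hI00) _
  have hN₀ : Integrable (fun ω => ipwWeight e GLabel.N (X ω) *
      ((Y100 ω - Y000 ω) * indG G GLabel.N ω)) P := hterm (hI00.sub hI000) _
  have hC₀ : Integrable (fun ω => ipwWeight e GLabel.C (X ω) *
      ((Y100 ω - Y000 ω) * indG G GLabel.C ω)) P := hterm (hI00.sub hI000) _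
  have hT : ∫ ω, (Y110 ω - Y111 ω) * indG G GLabel.T ω ∂P =
      ∫ ω, e GLabel.T (X ω) * fT (X ω) ∂P := by
    rw [← hfT.integral_ipwWeight_mul hX hG (hI10.sub hI11) he hε hpos he1]
    refine integral_congr_ae (Eventually.of_forall fun ω => ?_)
    simp only [ipwWeight_T (hε.trans_le (hpos GLabel.T (X ω))).ne', one_mul]
  have hN : ∫ ω, e GLabel.T (X ω) * gN (X ω) ∂P = ∫ ω, e GLabel.T (X ω) * gC (X ω) ∂P :=
    integral_congr_ae (hA6.mono fun ω h => by simp only [h])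
  calc ∫ ω, ipwScore e (Y0 ω, Y1 ω, G ω, X ω) ∂P
      = ∫ ω, e GLabel.T (X ω) * fN (X ω) ∂P + ∫ ω, e GLabel.T (X ω) * gN (X ω) ∂P
          - ∫ ω, e GLabel.T (X ω) * gC (X ω) ∂P := by
        rw [integral_congr_ae (ipwScore_ae_eq hconsN hconsC hcons0), integral_sub _ hC₀,
          integral_add hN₁ hN₀,
          hfN.integral_ipwWeight_mul hX hG (hI01.sub hI00) he hε hpos he1,
          hgN.integral_ipwWeight_mul hX hG (hI00.sub hI000) he hε hpos he1,
          hgC.integral_ipwWeight_mul hX hG (hI00.sub hI000) he hε hpos he1]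
        exact hN₁.add hN₀
    _ = -∫ ω, (Y110 ω - Y111 ω) * indG G GLabel.T ω ∂P := by
        rw [hN, add_sub_cancel_right, hT, ← integral_neg]
        exact integral_congr_ae (hA5.mono fun ω h => by
          simp only [eq_neg_of_add_eq_zero_right h, mul_neg])
    _ = ∫ ω, (Y111 ω - Y110 ω) * indG G GLabel.T ω ∂P := by
        rw [← integral_neg]
        exact integral_congr_ae (Eventually.of_forall fun ω => by ring)

end Identification

theorem stmt_13_general
    {Ω : Type} [MeasurableSpace Ω] (P : Measure Ω) [IsProbabilityMeasure P]
    {q : ℕ} (X : Ω → (Fin q → ℝ)) (hX : Measurable X)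
    (G : Ω → GLabel) (hG : Measurable G)
    (Y0 Y1 : Ω → ℝ)
    (e : GLabel → (Fin q → ℝ) → ℝ) (he : ∀ g, Measurable (e g))
    (he1 : ∀ g x, e g x ≤ 1)
    (ε : ℝ) (hε : 0 < ε) (hpos : ∀ g x, ε ≤ e g x)
    (Y110 Y111 Y101 Y100 Y000 : Ω → ℝ)
    (hI10 : Integrable Y110 P) (hI11 : Integrable Y111 P)
    (hI01 : Integrable Y101 P) (hI00 : Integrable Y100 P) (hI000 : Integrable Y000 P)
    (hconsN : ∀ᵐ ω ∂P, G ω = GLabel.N → Y1 ω = Y101 ω)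
    (hconsC : ∀ᵐ ω ∂P, G ω = GLabel.C → Y1 ω = Y100 ω)
    (hcons0 : Y0 =ᵐ[P] Y000)
    (fT fN : (Fin q → ℝ) → ℝ)
    (hfT : IsCondVersion P X G e GLabel.T (fun ω => Y110 ω - Y111 ω) fT)
    (hfN : IsCondVersion P X G e GLabel.N (fun ω => Y101 ω - Y100 ω) fN)
    (hA5 : ∀ᵐ ω ∂P, fT (X ω) + fN (X ω) = 0)
    (gN gC : (Fin q → ℝ) → ℝ)
    (hgN : IsCondVersion P X G e GLabel.N (fun ω => Y100 ω - Y000 ω) gN)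
    (hgC : IsCondVersion P X G e GLabel.C (fun ω => Y100 ω - Y000 ω) gC)
    (hA6 : ∀ᵐ ω ∂P, gN (X ω) = gC (X ω))
    (V : ℕ → Ω → ℝ × ℝ × GLabel × (Fin q → ℝ))
    (hVindep : iIndepFun V P)
    (hVid : ∀ i, IdentDistrib (V i) (fun ω => (Y0 ω, Y1 ω, G ω, X ω)) P P)
    :
    ∀ᵐ ω ∂P, Tendsto (fun n : ℕ => (n : ℝ)⁻¹ * ∑ i ∈ Finset.range n,
        (e GLabel.T (V i ω).2.2.2 / (P {ω | G ω = GLabel.T}).toReal) *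
          ((if (V i ω).2.2.1 = GLabel.N then (1:ℝ) else 0) / e GLabel.N (V i ω).2.2.2 -
            (if (V i ω).2.2.1 = GLabel.C then (1:ℝ) else 0) / e GLabel.C (V i ω).2.2.2) *
          ((V i ω).2.1 - (V i ω).1))
      atTop (𝓝 ((∫ ω, (Y111 ω - Y110 ω) * indG G GLabel.T ω ∂P) / (P {ω | G ω = GLabel.T}).toReal)) := by
  set pT := (P {ω | G ω = GLabel.T}).toReal
  have hlaw := ae_tendsto_average_comp_of_iIndepFun ((measurable_ipwScore he).div_const pT)
    hVindep hVid ((integrable_ipwScore hX hG he hε hpos he1 hI01 hI00 hI000 hconsN hconsC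
      hcons0).div_const pT)
  rw [integral_div, integral_ipwScore hX hG he hε hpos he1 hI10 hI11 hI01 hI00 hI000 hconsN
    hconsC hcons0 hfT hfN hA5 hgN hgC hA6] at hlaw
  filter_upwards [hlaw] with ω hω
  convert hω using 4 with n i
  simp only [ipwScore]
  ring

theorem stmt_13
    {Ω : Type} [MeasurableSpace Ω] (P : Measure Ω) [IsProbabilityMeasure P]
    {q : ℕ} (X : Ω → (Fin q → ℝ)) (hX : Measurable X)
    (G : Ω → GLabel) (hG : Measurable G)
    (Y0 Y1 : Ω → ℝ) (hY0 : Integrable Y0 P) (hY1 : Integrable Y1 P)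
    (e : GLabel → (Fin q → ℝ) → ℝ) (he : ∀ g, Measurable (e g))
    (he1 : ∀ g x, e g x ≤ 1)
    (hprop : ∀ g : GLabel,
      P[(fun ω => indG G g ω) | sigmaX X] =ᵐ[P] (fun ω => e g (X ω)))
    (ε : ℝ) (hε : 0 < ε) (hpos : ∀ g x, ε ≤ e g x)
    (hpT : 0 < (P {ω | G ω = GLabel.T}).toReal)
    (Y110 Y111 Y101 Y100 Y000 : Ω → ℝ)
    (hI10 : Integrable Y110 P) (hI11 : Integrable Y111 P)
    (hI01 : Integrable Y101 P) (hI00 : Integrable Y100 P) (hI000 : Integrable Y000 P)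
    (hconsT : ∀ᵐ ω ∂P, G ω = GLabel.T → Y1 ω = Y110 ω)
    (hconsN : ∀ᵐ ω ∂P, G ω = GLabel.N → Y1 ω = Y101 ω)
    (hconsC : ∀ᵐ ω ∂P, G ω = GLabel.C → Y1 ω = Y100 ω)
    (hcons0 : Y0 =ᵐ[P] Y000)
    (fT fN : (Fin q → ℝ) → ℝ)
    (hfT : IsCondVersion P X G e GLabel.T (fun ω => Y110 ω - Y111 ω) fT)
    (hfN : IsCondVersion P X G e GLabel.N (fun ω => Y101 ω - Y100 ω) fN)
    (hA5 : ∀ᵐ ω ∂P, fT (X ω) + fN (X ω) = 0)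
    (gN gC : (Fin q → ℝ) → ℝ)
    (hgN : IsCondVersion P X G e GLabel.N (fun ω => Y100 ω - Y000 ω) gN)
    (hgC : IsCondVersion P X G e GLabel.C (fun ω => Y100 ω - Y000 ω) gC)
    (hA6 : ∀ᵐ ω ∂P, gN (X ω) = gC (X ω))
    (V : ℕ → Ω → ℝ × ℝ × GLabel × (Fin q → ℝ))
    (hVmeas : ∀ i, Measurable (V i))
    (hVindep : iIndepFun V P)
    (hVid : ∀ i, IdentDistrib (V i) (fun ω => (Y0 ω, Y1 ω, G ω, X ω)) P P)
    :
    ∀ᵐ ω ∂P, Tendsto (fun n : ℕ => (n : ℝ)⁻¹ * ∑ i ∈ Finset.range n,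
        (e GLabel.T (V i ω).2.2.2 / (P {ω | G ω = GLabel.T}).toReal) *
          ((if (V i ω).2.2.1 = GLabel.N then (1:ℝ) else 0) / e GLabel.N (V i ω).2.2.2 -
            (if (V i ω).2.2.1 = GLabel.C then (1:ℝ) else 0) / e GLabel.C (V i ω).2.2.2) *
          ((V i ω).2.1 - (V i ω).1))
      atTop (𝓝 ((∫ ω, (Y111 ω - Y110 ω) * indG G GLabel.T ω ∂P) / (P {ω | G ω = GLabel.T}).toReal)) :=
  stmt_13_general P X hX G hG Y0 Y1 e he he1 ε hε hpos Y110 Y111 Y101 Y100 Y000 hI10 hI11 hI01 hI00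
    hI000 hconsN hconsC hcons0 fT fN hfT hfN hA5 gN gC hgN hgC hA6 V hVindep hVid
end
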